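/- arXiv:1301.6150 — 7 statements merged into one kernel-verified Lean document; each statement's English description precedes it below -/
import Mathlib

section
/- Let V be a binary random variable and Y_1, Y_2 random variables on finite alphabets. If the channel P_{Y_2|V} is stochastically degraded with respect to P_{Y_1|V}, i.e., there exists a conditional distribution P̃_{Y_2|Y_1} such that P_{Y_2|V}(y_2|v) = \sum_{y_1} P_{Y_1|V}(y_1|v) P̃_{Y_2|Y_1}(y_2|y_1) for all y_2, v, then the Bhattacharyya parameters satisfy Z(V|Y_2) \geq Z(V|Y_1). -/
open scoped BigOperators

/-- If the channel `W2 = P_{Y₂|V}` is stochastically degraded with respect to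
`W1 = P_{Y₁|V}` (via an intermediate channel `K`), then for any input distribution
`pV` on the binary `V`, the Bhattacharyya parameters satisfy `Z(V|Y₂) ≥ Z(V|Y₁)`. -/
theorem bhattacharyya_le_of_degraded {Y1 Y2 : Type*} [Fintype Y1] [Fintype Y2]
    (pV : Fin 2 → ℝ) (hpV : ∀ v, 0 ≤ pV v) (hpVsum : ∑ v, pV v = 1)
    (W1 : Fin 2 → Y1 → ℝ) (hW1 : ∀ v y, 0 ≤ W1 v y) (hW1sum : ∀ v, ∑ y, W1 v y = 1)
    (W2 : Fin 2 → Y2 → ℝ) (hW2 : ∀ v y, 0 ≤ W2 v y) (hW2sum : ∀ v, ∑ y, W2 v y = 1)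
    (K : Y1 → Y2 → ℝ) (hK : ∀ y1 y2, 0 ≤ K y1 y2) (hKsum : ∀ y1, ∑ y2, K y1 y2 = 1)
    (hdeg : ∀ v y2, W2 v y2 = ∑ y1, W1 v y1 * K y1 y2) :
    2 * ∑ y1, Real.sqrt ((pV 0 * W1 0 y1) * (pV 1 * W1 1 y1))
      ≤ 2 * ∑ y2, Real.sqrt ((pV 0 * W2 0 y2) * (pV 1 * W2 1 y2)) := by
  have key : ∀ y2, ∑ y1, Real.sqrt ((pV 0 * W1 0 y1) * (pV 1 * W1 1 y1)) * K y1 y2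
      ≤ Real.sqrt ((pV 0 * W2 0 y2) * (pV 1 * W2 1 y2)) := by
    intro y2
    have hf : ∀ y1, 0 ≤ pV 0 * W1 0 y1 * K y1 y2 := fun y1 => mul_nonneg (mul_nonneg (hpV _) (hW1 _ _)) (hK _ _)
    have hg : ∀ y1, 0 ≤ pV 1 * W1 1 y1 * K y1 y2 := fun y1 => mul_nonneg (mul_nonneg (hpV _) (hW1 _ _)) (hK _ _)
    have h1 := Real.sum_sqrt_mul_sqrt_le (f := fun y1 => pV 0 * W1 0 y1 * K y1 y2)
      (g := fun y1 => pV 1 * W1 1 y1 * K y1 y2) Finset.univ hf hg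
    have hl : ∀ y1, Real.sqrt (pV 0 * W1 0 y1 * K y1 y2) *
        Real.sqrt (pV 1 * W1 1 y1 * K y1 y2)
        = Real.sqrt ((pV 0 * W1 0 y1) * (pV 1 * W1 1 y1)) * K y1 y2 := by
      intro y1
      rw [← Real.sqrt_mul (hf y1)]
      have : pV 0 * W1 0 y1 * K y1 y2 * (pV 1 * W1 1 y1 * K y1 y2)
          = (pV 0 * W1 0 y1 * (pV 1 * W1 1 y1)) * (K y1 y2) ^ 2 := by ring
      rw [this, Real.sqrt_mul (mul_nonneg (mul_nonneg (hpV _) (hW1 _ _)) (mul_nonneg (hpV _) (hW1 _ _))), Real.sqrt_sq (hK y1 y2)]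
    have hr : Real.sqrt (∑ y1, pV 0 * W1 0 y1 * K y1 y2) *
        Real.sqrt (∑ y1, pV 1 * W1 1 y1 * K y1 y2)
        = Real.sqrt ((pV 0 * W2 0 y2) * (pV 1 * W2 1 y2)) := by
      have e0 : ∑ y1, pV 0 * W1 0 y1 * K y1 y2 = pV 0 * W2 0 y2 := by
        rw [hdeg 0 y2, Finset.mul_sum]
        exact Finset.sum_congr rfl fun y1 _ => by ring
      have e1 : ∑ y1, pV 1 * W1 1 y1 * K y1 y2 = pV 1 * W2 1 y2 := by
        rw [hdeg 1 y2, Finset.mul_sum]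
        exact Finset.sum_congr rfl fun y1 _ => by ring
      rw [e0, e1, Real.sqrt_mul (mul_nonneg (hpV _) (hW2 _ _))]
    calc ∑ y1, Real.sqrt ((pV 0 * W1 0 y1) * (pV 1 * W1 1 y1)) * K y1 y2
        = ∑ y1, Real.sqrt (pV 0 * W1 0 y1 * K y1 y2) *
            Real.sqrt (pV 1 * W1 1 y1 * K y1 y2) := by
          exact Finset.sum_congr rfl fun y1 _ => (hl y1).symm
      _ ≤ _ := h1
      _ = _ := hr
  have expand : ∑ y1, Real.sqrt ((pV 0 * W1 0 y1) * (pV 1 * W1 1 y1))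
      = ∑ y2, ∑ y1, Real.sqrt ((pV 0 * W1 0 y1) * (pV 1 * W1 1 y1)) * K y1 y2 := by
    rw [Finset.sum_comm]
    refine Finset.sum_congr rfl fun y1 _ => ?_
    rw [← Finset.mul_sum, hKsum y1, mul_one]
  have := Finset.sum_le_sum (fun y2 (_ : y2 ∈ Finset.univ) => key y2)
  rw [expand]
  linarith
end

section
/- Let X be a binary random variable and Y a random variable on a finite alphabet. Then the square of the Bhattacharyya parameter is at most the conditional entropy: Z(X|Y)^2 \leq H(X|Y), where H is measured in bits. -/
/-!
Cauchy–Schwarz with the weights `p 0 y + p 1 y` (which sum to one) bounds `Z²` by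
`∑ y, 4 p(0,y) p(1,y) / (p 0 y + p 1 y)`, so the claim reduces, letter by letter, to the binary
inequality `4 t (1 - t) log 2 ≤ h(t)`. That one is compared termwise in the series
`-log (1 - x) = ∑ xⁿ⁺¹ / (n + 1)`: it gives `h(t) = ∑ t (1 - t) (tⁿ + (1 - t)ⁿ) / (n + 1)` and
`log 2 = ∑ 2⁻ⁿ⁻¹ / (n + 1)`, and `tⁿ + (1 - t)ⁿ ≥ 2 · 2⁻ⁿ` by convexity of `xⁿ`.
-/

open Finset Real

lemma add_div_two_pow_le {a b : ℝ} (ha : 0 ≤ a) (hb : 0 ≤ b) (n : ℕ) :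
    ((a + b) / 2) ^ n ≤ (a ^ n + b ^ n) / 2 := by
  have h := (convexOn_pow n).2 (Set.mem_Ici.2 ha) (Set.mem_Ici.2 hb)
    (by norm_num : (0 : ℝ) ≤ 2⁻¹) (by norm_num : (0 : ℝ) ≤ 2⁻¹) (by norm_num)
  simp only [smul_eq_mul] at h
  rw [show (2⁻¹ : ℝ) * a + 2⁻¹ * b = (a + b) / 2 by ring] at h
  linarith

lemma hasSum_binEntropy {p : ℝ} (h₀ : 0 < p) (h₁ : p < 1) :
    HasSum (fun n : ℕ ↦ p * (1 - p) * (p ^ n + (1 - p) ^ n) / (n + 1)) (binEntropy p) := by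
  have hp := hasSum_pow_div_log_of_abs_lt_one (x := p) (by rw [abs_lt]; constructor <;> linarith)
  have hq := hasSum_pow_div_log_of_abs_lt_one (x := 1 - p)
    (by rw [abs_lt]; constructor <;> linarith)
  rw [sub_sub_cancel] at hq
  have h := (hq.mul_left p).add (hp.mul_left (1 - p))
  rw [binEntropy, log_inv, log_inv]
  convert h using 1
  · rfl
  · funext n
    ring

lemma hasSum_log_two : HasSum (fun n : ℕ ↦ (2⁻¹ : ℝ) ^ (n + 1) / (n + 1)) (log 2) := by
  have h := hasSum_pow_div_log_of_abs_lt_one (x := (2⁻¹ : ℝ)) (by norm_num [abs_of_pos])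
  rwa [show (1 : ℝ) - 2⁻¹ = 2⁻¹ by norm_num, log_inv, neg_neg] at h

lemma four_mul_mul_one_sub_mul_log_two_le_binEntropy {p : ℝ} (h₀ : 0 ≤ p) (h₁ : p ≤ 1) :
    4 * p * (1 - p) * log 2 ≤ binEntropy p := by
  rcases h₀.eq_or_lt with rfl | h₀
  · simp
  rcases h₁.eq_or_lt with rfl | h₁
  · simp
  refine hasSum_le (fun n ↦ ?_) (hasSum_log_two.mul_left (4 * p * (1 - p)))
    (hasSum_binEntropy h₀ h₁)
  have hpow := add_div_two_pow_le h₀.le (sub_nonneg.2 h₁.le) n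
  have hpq : 0 ≤ p * (1 - p) := mul_nonneg h₀.le (by linarith)
  calc 4 * p * (1 - p) * ((2⁻¹ : ℝ) ^ (n + 1) / (n + 1))
      = 2 * (p * (1 - p)) * ((p + (1 - p)) / 2) ^ n / (n + 1) := by ring
    _ ≤ 2 * (p * (1 - p)) * ((p ^ n + (1 - p) ^ n) / 2) / (n + 1) := by gcongr
    _ = p * (1 - p) * (p ^ n + (1 - p) ^ n) / (n + 1) := by ring

lemma four_mul_mul_div_add_le_neg_mul_logb_add_mul_logb {a b : ℝ} (ha : 0 ≤ a) (hb : 0 ≤ b) :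
    4 * (a * b) / (a + b) ≤ -(a * logb 2 (a / (a + b)) + b * logb 2 (b / (a + b))) := by
  rcases (add_nonneg ha hb).eq_or_lt with hab | hab
  · obtain ⟨rfl, rfl⟩ : a = 0 ∧ b = 0 := ⟨by linarith, by linarith⟩
    simp
  obtain ⟨s, p, hs, hp₀, hp₁, rfl, rfl⟩ :
      ∃ s p : ℝ, 0 < s ∧ 0 ≤ p ∧ p ≤ 1 ∧ a = s * p ∧ b = s * (1 - p) :=
    ⟨a + b, a / (a + b), hab, by positivity, div_le_one_of_le₀ (by linarith) hab.le,
      by field_simp, by field_simp; ring⟩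
  have hentropy := four_mul_mul_one_sub_mul_log_two_le_binEntropy hp₀ hp₁
  rw [binEntropy, log_inv, log_inv] at hentropy
  rw [show s * p + s * (1 - p) = s by ring, mul_div_cancel_left₀ p hs.ne',
    mul_div_cancel_left₀ (1 - p) hs.ne', logb, logb]
  calc 4 * (s * p * (s * (1 - p))) / s = s * (4 * p * (1 - p) * log 2) / log 2 := by
        field_simp
    _ ≤ s * (p * -log p + (1 - p) * -log (1 - p)) / log 2 := by gcongr
    _ = -(s * p * (log p / log 2) + s * (1 - p) * (log (1 - p) / log 2)) := by ring

lemma sq_sum_two_mul_sqrt_mul_le {ι : Type*} (s : Finset ι) {a b : ι → ℝ}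
    (ha : ∀ i ∈ s, 0 ≤ a i) (hb : ∀ i ∈ s, 0 ≤ b i) :
    (∑ i ∈ s, 2 * √(a i * b i)) ^ 2
      ≤ (∑ i ∈ s, (a i + b i)) * ∑ i ∈ s, 4 * (a i * b i) / (a i + b i) := by
  refine sum_sq_le_sum_mul_sum_of_sq_le_mul s (fun i hi ↦ add_nonneg (ha i hi) (hb i hi))
    (fun i hi ↦ by have := ha i hi; have := hb i hi; positivity) fun i hi ↦ ?_
  rw [mul_pow, sq_sqrt (mul_nonneg (ha i hi) (hb i hi))]
  rcases (add_nonneg (ha i hi) (hb i hi)).eq_or_lt with hs | hs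
  · rw [← hs, zero_mul]
    nlinarith [ha i hi, hb i hi]
  · rw [mul_div_cancel₀ _ hs.ne']
    norm_num

/-- For binary `X` and finite-alphabet `Y` with joint distribution `p`,
the Bhattacharyya parameter satisfies `Z(X|Y)² ≤ H(X|Y)` (entropy in bits). -/
theorem bhattacharyya_sq_le_condEntropy {Y : Type*} [Fintype Y]
    (p : Fin 2 → Y → ℝ) (hp : ∀ x y, 0 ≤ p x y)
    (hsum : ∑ x, ∑ y, p x y = 1) :
    (2 * ∑ y, Real.sqrt (p 0 y * p 1 y)) ^ 2
      ≤ -∑ x, ∑ y, p x y * Real.logb 2 (p x y / ∑ x', p x' y) := by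
  have hmarg : ∑ y, (p 0 y + p 1 y) = 1 := by rwa [Fin.sum_univ_two, ← sum_add_distrib] at hsum
  calc (2 * ∑ y, √(p 0 y * p 1 y)) ^ 2 = (∑ y, 2 * √(p 0 y * p 1 y)) ^ 2 := by rw [mul_sum]
    _ ≤ (∑ y, (p 0 y + p 1 y)) * ∑ y, 4 * (p 0 y * p 1 y) / (p 0 y + p 1 y) :=
        sq_sum_two_mul_sqrt_mul_le _ (fun y _ ↦ hp 0 y) (fun y _ ↦ hp 1 y)
    _ = ∑ y, 4 * (p 0 y * p 1 y) / (p 0 y + p 1 y) := by rw [hmarg, one_mul]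
    _ ≤ ∑ y, -(p 0 y * logb 2 (p 0 y / (p 0 y + p 1 y))
          + p 1 y * logb 2 (p 1 y / (p 0 y + p 1 y))) :=
        sum_le_sum fun y _ ↦ four_mul_mul_div_add_le_neg_mul_logb_add_mul_logb (hp 0 y) (hp 1 y)
    _ = -∑ x, ∑ y, p x y * logb 2 (p x y / ∑ x', p x' y) := by
        simp only [Fin.sum_univ_two, sum_add_distrib, sum_neg_distrib]
end

section
/- Let X be a binary random variable and Y a random variable on a finite alphabet. Then the conditional entropy satisfies H(X|Y) \leq \log_2(1 + Z(X|Y)), where Z(X|Y) is the Bhattacharyya parameter. -/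
open scoped BigOperators

/-- Pointwise key inequality: for `0 ≤ a ≤ b` and `S ≥ 1`,
`-(a log₂(a/b)) ≤ (2/ln 2)(√(ab)/√S - a) + a log₂ S`. -/
lemma bhat_key_pt (S : ℝ) (hS : 1 ≤ S) (a b : ℝ) (ha : 0 ≤ a) (hab : a ≤ b) :
    -(a * Real.logb 2 (a / b)) ≤
      (2 / Real.log 2) * (Real.sqrt (a * b) / Real.sqrt S - a) + a * Real.logb 2 S := by
  have hS0 : (0:ℝ) < S := lt_of_lt_of_le one_pos hS
  have hlog2 : (0:ℝ) < Real.log 2 := Real.log_pos one_lt_two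
  rcases eq_or_lt_of_le ha with h | h
  · simp [← h]
  · have hb : 0 < b := lt_of_lt_of_le h hab
    have ht : 0 < b / (a * S) := by positivity
    have hsq : 0 < Real.sqrt (b / (a * S)) := Real.sqrt_pos.mpr ht
    have h1 : Real.log (Real.sqrt (b / (a * S))) ≤ Real.sqrt (b / (a * S)) - 1 :=
      Real.log_le_sub_one_of_pos hsq
    have e1 : Real.log (b / (a * S)) = 2 * Real.log (Real.sqrt (b / (a * S))) := by
      conv_lhs => rw [← Real.sq_sqrt ht.le]
      rw [Real.log_pow]
      norm_num
    have e2 : a * Real.sqrt (b / (a * S)) = Real.sqrt (a * b) / Real.sqrt S := by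
      nth_rewrite 1 [← Real.sqrt_sq h.le]
      rw [← Real.sqrt_mul (sq_nonneg a)]
      rw [show a ^ 2 * (b / (a * S)) = (a * b) / S by field_simp]
      exact Real.sqrt_div (by positivity) S
    have main : a * Real.log (b / (a * S)) ≤ 2 * (Real.sqrt (a * b) / Real.sqrt S - a) := by
      rw [e1]
      calc a * (2 * Real.log (Real.sqrt (b / (a * S))))
          ≤ a * (2 * (Real.sqrt (b / (a * S)) - 1)) := by
            apply mul_le_mul_of_nonneg_left _ ha; linarith
        _ = 2 * (a * Real.sqrt (b / (a * S)) - a) := by ring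
        _ = 2 * (Real.sqrt (a * b) / Real.sqrt S - a) := by rw [e2]
    have e3 : Real.log (b / (a * S)) = Real.log b - Real.log a - Real.log S := by
      rw [Real.log_div hb.ne' (by positivity), Real.log_mul h.ne' hS0.ne']; ring
    rw [Real.logb, Real.logb, Real.log_div h.ne' hb.ne']
    rw [show -(a * ((Real.log a - Real.log b) / Real.log 2))
        = (a * Real.log (b / (a * S)) + a * Real.log S) / Real.log 2 by rw [e3]; field_simp; ring]
    rw [show (2 / Real.log 2) * (Real.sqrt (a * b) / Real.sqrt S - a)
          + a * (Real.log S / Real.log 2)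
        = (2 * (Real.sqrt (a * b) / Real.sqrt S - a) + a * Real.log S) / Real.log 2 by ring]
    apply div_le_div_of_nonneg_right ?_ hlog2.le
    linarith

/-- For binary `X` and finite-alphabet `Y` with joint distribution `p`,
the conditional entropy (in bits) satisfies `H(X|Y) ≤ log₂(1 + Z(X|Y))`,
where `Z(X|Y)` is the Bhattacharyya parameter. -/
theorem condEntropy_le_logb_one_add_bhattacharyya {Y : Type*} [Fintype Y]
    (p : Fin 2 → Y → ℝ) (hp : ∀ x y, 0 ≤ p x y)
    (hsum : ∑ x, ∑ y, p x y = 1) :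
    -∑ x, ∑ y, p x y * Real.logb 2 (p x y / ∑ x', p x' y)
      ≤ Real.logb 2 (1 + 2 * ∑ y, Real.sqrt (p 0 y * p 1 y)) := by
  have hlog2 : (0:ℝ) < Real.log 2 := Real.log_pos one_lt_two
  set Z : ℝ := 2 * ∑ y, Real.sqrt (p 0 y * p 1 y) with hZdef
  have hZ0 : 0 ≤ Z := by
    apply mul_nonneg (by norm_num)
    exact Finset.sum_nonneg fun y _ => Real.sqrt_nonneg _
  set S : ℝ := 1 + Z with hSdef
  have hS1 : (1:ℝ) ≤ S := by simp [hSdef]; linarith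
  have hS0 : (0:ℝ) < S := lt_of_lt_of_le one_pos hS1
  have hsqS : (0:ℝ) < Real.sqrt S := Real.sqrt_pos.mpr hS0
  have hqle : ∀ x y, p x y ≤ ∑ x', p x' y := fun x y =>
    Finset.single_le_sum (fun i _ => hp i y) (Finset.mem_univ x)
  have hq0 : ∀ y : Y, (0:ℝ) ≤ ∑ x', p x' y := fun y => Finset.sum_nonneg fun i _ => hp i y
  -- total probability of Y marginal
  have hqsum : ∑ y : Y, (∑ x', p x' y) = 1 := by rw [Finset.sum_comm]; exact hsum
  -- Cauchy–Schwarz step: ∑ₓ∑ᵧ √(p x y · q y) ≤ √S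
  have hT : (∑ x, ∑ y, Real.sqrt (p x y * ∑ x', p x' y)) ≤ Real.sqrt S := by
    rw [Finset.sum_comm]
    have e : ∀ y : Y, (∑ x, Real.sqrt (p x y * ∑ x', p x' y))
        = Real.sqrt (∑ x', p x' y) * (Real.sqrt (p 0 y) + Real.sqrt (p 1 y)) := by
      intro y
      rw [Fin.sum_univ_two, Real.sqrt_mul (hp 0 y), Real.sqrt_mul (hp 1 y)]; ring
    simp_rw [e]
    have hcs := Finset.sum_mul_sq_le_sq_mul_sq Finset.univ
      (fun y : Y => Real.sqrt (∑ x', p x' y))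
      (fun y : Y => Real.sqrt (p 0 y) + Real.sqrt (p 1 y))
    have hf : ∑ y : Y, (Real.sqrt (∑ x', p x' y)) ^ 2 = 1 := by
      rw [← hqsum]
      exact Finset.sum_congr rfl fun y _ => Real.sq_sqrt (hq0 y)
    have hg : ∑ y : Y, (Real.sqrt (p 0 y) + Real.sqrt (p 1 y)) ^ 2 = S := by
      have : ∀ y : Y, (Real.sqrt (p 0 y) + Real.sqrt (p 1 y)) ^ 2
          = (∑ x', p x' y) + 2 * Real.sqrt (p 0 y * p 1 y) := by
        intro y
        rw [add_sq, Real.sq_sqrt (hp 0 y), Real.sq_sqrt (hp 1 y),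
          Real.sqrt_mul (hp 0 y), Fin.sum_univ_two]
        ring
      simp_rw [this]
      rw [Finset.sum_add_distrib, hqsum, ← Finset.mul_sum, hSdef, hZdef]
    rw [hf, hg, one_mul] at hcs
    have hTnn : 0 ≤ ∑ y : Y, Real.sqrt (∑ x', p x' y) * (Real.sqrt (p 0 y) + Real.sqrt (p 1 y)) :=
      Finset.sum_nonneg fun y _ => mul_nonneg (Real.sqrt_nonneg _)
        (by positivity)
    exact (Real.le_sqrt hTnn hS0.le).mpr hcs
  -- apply the pointwise inequality and sum up
  have step1 : -∑ x, ∑ y, p x y * Real.logb 2 (p x y / ∑ x', p x' y)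
      ≤ ∑ x, ∑ y, ((2 / Real.log 2) *
          (Real.sqrt (p x y * ∑ x', p x' y) / Real.sqrt S - p x y) + p x y * Real.logb 2 S) := by
    rw [← Finset.sum_neg_distrib]
    apply Finset.sum_le_sum
    intro x _
    rw [← Finset.sum_neg_distrib]
    apply Finset.sum_le_sum
    intro y _
    exact bhat_key_pt S hS1 _ _ (hp x y) (hqle x y)
  have step2 : ∑ x, ∑ y, ((2 / Real.log 2) *
          (Real.sqrt (p x y * ∑ x', p x' y) / Real.sqrt S - p x y) + p x y * Real.logb 2 S)
      = (2 / Real.log 2) *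
          ((∑ x, ∑ y, Real.sqrt (p x y * ∑ x', p x' y)) / Real.sqrt S - 1)
        + Real.logb 2 S := by
    simp_rw [Finset.sum_add_distrib, ← Finset.mul_sum, Finset.sum_sub_distrib,
      ← Finset.sum_div, ← Finset.sum_mul]
    rw [hsum]
    ring
  have step3 : (2 / Real.log 2) *
          ((∑ x, ∑ y, Real.sqrt (p x y * ∑ x', p x' y)) / Real.sqrt S - 1) ≤ 0 := by
    apply mul_nonpos_of_nonneg_of_nonpos (by positivity)
    rw [sub_nonpos, div_le_one hsqS]
    exact hT
  calc -∑ x, ∑ y, p x y * Real.logb 2 (p x y / ∑ x', p x' y)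
      ≤ (2 / Real.log 2) *
          ((∑ x, ∑ y, Real.sqrt (p x y * ∑ x', p x' y)) / Real.sqrt S - 1)
        + Real.logb 2 S := by rw [← step2]; exact step1
    _ ≤ Real.logb 2 S := by linarith
end

section
/- Let X be a binary random variable and Y a random variable on a finite alphabet, and let 0 < \delta < 1/2. If Z(X|Y) \leq \delta, then H(X|Y) \leq \log_2(1 + \delta), and in particular H(X|Y) \leq \delta / \ln 2. -/
open scoped BigOperators

/-- For binary `X` and finite-alphabet `Y`, if the Bhattacharyya parameter satisfies
`Z(X|Y) ≤ δ` for some `0 < δ < 1/2`, then `H(X|Y) ≤ log₂(1 + δ)`, and in particular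
`H(X|Y) ≤ δ / ln 2` (entropy in bits). -/
theorem condEntropy_le_of_bhattacharyya_le {Y : Type*} [Fintype Y]
    (p : Fin 2 → Y → ℝ) (hp : ∀ x y, 0 ≤ p x y)
    (hsum : ∑ x, ∑ y, p x y = 1)
    (δ : ℝ) (hδ0 : 0 < δ) (hδ1 : δ < 1/2)
    (hZ : 2 * ∑ y, Real.sqrt (p 0 y * p 1 y) ≤ δ) :
    -∑ x, ∑ y, p x y * Real.logb 2 (p x y / ∑ x', p x' y) ≤ Real.logb 2 (1 + δ)
    ∧ -∑ x, ∑ y, p x y * Real.logb 2 (p x y / ∑ x', p x' y) ≤ δ / Real.log 2 := by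
  set q : Y → ℝ := fun y => ∑ x', p x' y with hq
  have hq2 : ∀ y, q y = p 0 y + p 1 y := fun y => by
    simp [hq, Fin.sum_univ_two]
  have hqnn : ∀ y, 0 ≤ q y := fun y => by
    rw [hq2]; exact add_nonneg (hp 0 y) (hp 1 y)
  have hple : ∀ x y, p x y ≤ q y := by
    intro x y
    rw [hq2]
    fin_cases x
    · exact le_add_of_nonneg_right (hp 1 y)
    · exact le_add_of_nonneg_left (hp 0 y)
  have hqsum : ∑ y, q y = 1 := by
    rw [← hsum, Finset.sum_comm]
  set S : ℝ := ∑ x, ∑ y, Real.sqrt (p x y * q y) with hS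
  have hS1 : (1:ℝ) ≤ S := by
    rw [← hsum]
    apply Finset.sum_le_sum; intro x _
    apply Finset.sum_le_sum; intro y _
    calc p x y = Real.sqrt (p x y * p x y) := by
          rw [Real.sqrt_mul_self (hp x y)]
      _ ≤ Real.sqrt (p x y * q y) :=
          Real.sqrt_le_sqrt (mul_le_mul_of_nonneg_left (hple x y) (hp x y))
  have hS0 : 0 < S := lt_of_lt_of_le one_pos hS1
  -- Cauchy-Schwarz bound: S^2 ≤ 1 + δ
  have hSrw : S = ∑ y, (Real.sqrt (p 0 y) + Real.sqrt (p 1 y)) * Real.sqrt (q y) := by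
    rw [hS, Finset.sum_comm]
    apply Finset.sum_congr rfl; intro y _
    rw [Fin.sum_univ_two, Real.sqrt_mul (hp 0 y), Real.sqrt_mul (hp 1 y), add_mul]
  have hS2 : S ^ 2 ≤ 1 + δ := by
    rw [hSrw]
    calc (∑ y, (Real.sqrt (p 0 y) + Real.sqrt (p 1 y)) * Real.sqrt (q y)) ^ 2
        ≤ (∑ y, (Real.sqrt (p 0 y) + Real.sqrt (p 1 y)) ^ 2) * ∑ y, Real.sqrt (q y) ^ 2 :=
          Finset.sum_mul_sq_le_sq_mul_sq _ _ _
      _ = ∑ y, (Real.sqrt (p 0 y) + Real.sqrt (p 1 y)) ^ 2 := by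
          have : ∀ y : Y, Real.sqrt (q y) ^ 2 = q y := fun y => Real.sq_sqrt (hqnn y)
          simp only [this, hqsum, mul_one]
      _ = ∑ y, (q y + 2 * Real.sqrt (p 0 y * p 1 y)) := by
          apply Finset.sum_congr rfl; intro y _
          rw [add_sq, Real.sq_sqrt (hp 0 y), Real.sq_sqrt (hp 1 y), hq2,
            Real.sqrt_mul (hp 0 y)]
          ring
      _ = 1 + 2 * ∑ y, Real.sqrt (p 0 y * p 1 y) := by
          rw [Finset.sum_add_distrib, hqsum, ← Finset.mul_sum]
      _ ≤ 1 + δ := by linarith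
  -- key pointwise estimate
  have hkey : ∀ x y, p x y * Real.log (q y / p x y) ≤
      2 * (Real.sqrt (p x y * q y) / S - p x y + p x y * Real.log S) := by
    intro x y
    rcases eq_or_lt_of_le (hp x y) with h0 | h0
    · rw [← h0]
      simp only [zero_mul, mul_zero, sub_zero, add_zero]
      positivity
    · have hq0 : 0 < q y := lt_of_lt_of_le h0 (hple x y)
      have ha : 0 < Real.sqrt (p x y * q y) := Real.sqrt_pos.mpr (mul_pos h0 hq0)
      have hlog : Real.log (q y / p x y) = 2 * Real.log (Real.sqrt (p x y * q y) / p x y) := by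
        rw [Real.log_div (ne_of_gt ha) (ne_of_gt h0), Real.log_sqrt (le_of_lt (mul_pos h0 hq0)),
          Real.log_mul (ne_of_gt h0) (ne_of_gt hq0),
          Real.log_div (ne_of_gt hq0) (ne_of_gt h0)]
        ring
      rw [hlog]
      have h1 : Real.log (Real.sqrt (p x y * q y) / (p x y * S)) =
          Real.log (Real.sqrt (p x y * q y) / p x y) - Real.log S := by
        rw [div_mul_eq_div_div,
          Real.log_div (ne_of_gt (div_pos ha h0)) (ne_of_gt hS0)]
      have h2 : Real.log (Real.sqrt (p x y * q y) / (p x y * S)) ≤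
          Real.sqrt (p x y * q y) / (p x y * S) - 1 :=
        Real.log_le_sub_one_of_pos (by positivity)
      have h3 : p x y * (Real.sqrt (p x y * q y) / (p x y * S) - 1) =
          Real.sqrt (p x y * q y) / S - p x y := by
        field_simp
      nlinarith [h2, h0, h1]
  -- sum the pointwise estimate
  have hmain : ∑ x, ∑ y, p x y * Real.log (q y / p x y) ≤ Real.log (1 + δ) := by
    calc ∑ x, ∑ y, p x y * Real.log (q y / p x y)
        ≤ ∑ x, ∑ y, 2 * (Real.sqrt (p x y * q y) / S - p x y + p x y * Real.log S) := by
          apply Finset.sum_le_sum; intro x _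
          exact Finset.sum_le_sum fun y _ => hkey x y
      _ = 2 * (S / S - 1 + 1 * Real.log S) := by
          simp only [← Finset.mul_sum, Finset.sum_add_distrib, Finset.sum_sub_distrib,
            ← Finset.sum_div, ← Finset.sum_mul, hsum, ← hS]
      _ = Real.log (S ^ 2) := by
          rw [div_self (ne_of_gt hS0), Real.log_pow]
          push_cast; ring
      _ ≤ Real.log (1 + δ) := Real.log_le_log (by positivity) hS2
  have hln2 : (0:ℝ) < Real.log 2 := Real.log_pos one_lt_two
  have hEq : -∑ x, ∑ y, p x y * Real.logb 2 (p x y / q y) =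
      (∑ x, ∑ y, p x y * Real.log (q y / p x y)) / Real.log 2 := by
    rw [Finset.sum_div]
    rw [← Finset.sum_neg_distrib]
    apply Finset.sum_congr rfl; intro x _
    rw [Finset.sum_div, ← Finset.sum_neg_distrib]
    apply Finset.sum_congr rfl; intro y _
    have hinv : Real.log (q y / p x y) = -Real.log (p x y / q y) := by
      rw [← Real.log_inv, inv_div]
    rw [Real.logb, hinv]
    ring
  have hfirst : -∑ x, ∑ y, p x y * Real.logb 2 (p x y / q y) ≤ Real.logb 2 (1 + δ) := by
    rw [hEq, Real.logb]
    exact (div_le_div_iff_of_pos_right hln2).mpr hmain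
  refine ⟨hfirst, le_trans hfirst ?_⟩
  rw [Real.logb]
  apply (div_le_div_iff_of_pos_right hln2).mpr
  nlinarith [Real.log_le_sub_one_of_pos (show (0:ℝ) < 1 + δ by linarith)]
end

section
/- Let V be a binary random variable, and let Y_1, Y_2 be random variables on finite alphabets such that P_{Y_2|V} is stochastically degraded with respect to P_{Y_1|V}. Let (V^1, Y_1^1, Y_2^1) and (V^2, Y_1^2, Y_2^2) be two i.i.d. copies distributed according to P_{V,Y_1,Y_2}, and define U^1 = V^1 \oplus V^2 (XOR) and U^2 = V^2. Then the channel P_{(Y_2^1,Y_2^2)|U^1} is stochastically degraded with respect to P_{(Y_1^1,Y_1^2)|U^1}, and consequently Z(U^1 | Y_2^{1:2}) \geq Z(U^1 | Y_1^{1:2}). -/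
open scoped BigOperators

private lemma sum_sqrt_mul_le {α : Type*} [Fintype α] (f g : α → ℝ)
    (hf : ∀ a, 0 ≤ f a) (hg : ∀ a, 0 ≤ g a) :
    ∑ a, Real.sqrt (f a * g a) ≤ Real.sqrt ((∑ a, f a) * (∑ a, g a)) := by
  have h := Finset.sum_sq_le_sum_mul_sum_of_sq_eq_mul (Finset.univ : Finset α)
    (r := fun a => Real.sqrt (f a * g a)) (f := f) (g := g)
    (fun a _ => hf a) (fun a _ => hg a)
    (fun a _ => Real.sq_sqrt (mul_nonneg (hf a) (hg a)))
  have hnn : 0 ≤ ∑ a, Real.sqrt (f a * g a) :=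
    Finset.sum_nonneg fun a _ => Real.sqrt_nonneg _
  exact (Real.le_sqrt hnn (mul_nonneg (Finset.sum_nonneg fun a _ => hf a)
    (Finset.sum_nonneg fun a _ => hg a))).mpr h

/-- Two i.i.d. copies `(V¹,Y₁¹,Y₂¹)`, `(V²,Y₁²,Y₂²)` with binary `V` distributed as `pV`
and channels `W1 = P_{Y₁|V}`, `W2 = P_{Y₂|V}` where `W2` is stochastically degraded
w.r.t. `W1` via `K`.  With `U¹ = V¹ ⊕ V²`, the joint distribution of `(U¹, Y₂¹, Y₂²)`
is `J2 u (y,y') = ∑_{v₂} pV(u⊕v₂) pV(v₂) W2(y|u⊕v₂) W2(y'|v₂)` (similarly `J1`).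
Then the channel to `(Y₂¹,Y₂²)` is stochastically degraded w.r.t. the channel to
`(Y₁¹,Y₁²)`, and consequently `Z(U¹|Y₂^{1:2}) ≥ Z(U¹|Y₁^{1:2})`. -/
theorem polar_first_bit_degradation_and_bhattacharyya
    {Y1 Y2 : Type*} [Fintype Y1] [Fintype Y2]
    (pV : Fin 2 → ℝ) (hpV : ∀ v, 0 ≤ pV v) (hpVsum : ∑ v, pV v = 1)
    (W1 : Fin 2 → Y1 → ℝ) (hW1 : ∀ v y, 0 ≤ W1 v y) (hW1sum : ∀ v, ∑ y, W1 v y = 1)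
    (W2 : Fin 2 → Y2 → ℝ) (hW2 : ∀ v y, 0 ≤ W2 v y) (hW2sum : ∀ v, ∑ y, W2 v y = 1)
    (K : Y1 → Y2 → ℝ) (hK : ∀ y1 y2, 0 ≤ K y1 y2) (hKsum : ∀ y1, ∑ y2, K y1 y2 = 1)
    (hdeg : ∀ v y2, W2 v y2 = ∑ y1, W1 v y1 * K y1 y2)
    (J1 : Fin 2 → Y1 × Y1 → ℝ)
    (hJ1 : ∀ u y, J1 u y = ∑ v2, pV (u + v2) * pV v2 * W1 (u + v2) y.1 * W1 v2 y.2)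
    (J2 : Fin 2 → Y2 × Y2 → ℝ)
    (hJ2 : ∀ u y, J2 u y = ∑ v2, pV (u + v2) * pV v2 * W2 (u + v2) y.1 * W2 v2 y.2) :
    (∃ K' : Y1 × Y1 → Y2 × Y2 → ℝ,
        (∀ a b, 0 ≤ K' a b) ∧ (∀ a, ∑ b, K' a b = 1) ∧
        ∀ u y, J2 u y = ∑ a, J1 u a * K' a y)
    ∧ 2 * ∑ y : Y1 × Y1, Real.sqrt (J1 0 y * J1 1 y)
        ≤ 2 * ∑ y : Y2 × Y2, Real.sqrt (J2 0 y * J2 1 y) := by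
  set K' : Y1 × Y1 → Y2 × Y2 → ℝ := fun a b => K a.1 b.1 * K a.2 b.2 with hK'
  have hK'nn : ∀ a b, 0 ≤ K' a b := fun a b => mul_nonneg (hK _ _) (hK _ _)
  have hK'sum : ∀ a, ∑ b, K' a b = 1 := by
    intro a
    rw [Fintype.sum_prod_type]
    simp [hK', ← Finset.mul_sum, hKsum]
  have hdeg' : ∀ u y, J2 u y = ∑ a, J1 u a * K' a y := by
    intro u y
    rw [hJ2, Fintype.sum_prod_type]
    conv_rhs => rw [Finset.sum_comm]
    simp only [hJ1, hdeg, Finset.sum_mul, Finset.mul_sum]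
    rw [Finset.sum_comm]
    refine Finset.sum_congr rfl fun a1 _ => ?_
    rw [Finset.sum_comm]
    refine Finset.sum_congr rfl fun a2 _ => ?_
    refine Finset.sum_congr rfl fun v2 _ => ?_
    ring
  have hJ1nn : ∀ u y, 0 ≤ J1 u y := by
    intro u y
    rw [hJ1]
    exact Finset.sum_nonneg fun v2 _ =>
      mul_nonneg (mul_nonneg (mul_nonneg (hpV _) (hpV _)) (hW1 _ _)) (hW1 _ _)
  refine ⟨⟨K', hK'nn, hK'sum, hdeg'⟩, ?_⟩
  have key : ∀ y : Y2 × Y2,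
      ∑ a, Real.sqrt (J1 0 a * J1 1 a) * K' a y ≤ Real.sqrt (J2 0 y * J2 1 y) := by
    intro y
    have h := sum_sqrt_mul_le (fun a => J1 0 a * K' a y) (fun a => J1 1 a * K' a y)
      (fun a => mul_nonneg (hJ1nn _ _) (hK'nn _ _))
      (fun a => mul_nonneg (hJ1nn _ _) (hK'nn _ _))
    rw [← hdeg' 0 y, ← hdeg' 1 y] at h
    refine le_trans (le_of_eq ?_) h
    refine Finset.sum_congr rfl fun a _ => ?_
    rw [show J1 0 a * K' a y * (J1 1 a * K' a y) = (J1 0 a * J1 1 a) * (K' a y)^2 by ring,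
      Real.sqrt_mul (mul_nonneg (hJ1nn _ _) (hJ1nn _ _)), Real.sqrt_sq (hK'nn _ _)]
  have h2 : ∑ y : Y1 × Y1, Real.sqrt (J1 0 y * J1 1 y)
      ≤ ∑ y : Y2 × Y2, Real.sqrt (J2 0 y * J2 1 y) := by
    calc ∑ a : Y1 × Y1, Real.sqrt (J1 0 a * J1 1 a)
        = ∑ y : Y2 × Y2, ∑ a, Real.sqrt (J1 0 a * J1 1 a) * K' a y := by
          rw [Finset.sum_comm]
          simp [← Finset.mul_sum, hK'sum]
      _ ≤ ∑ y : Y2 × Y2, Real.sqrt (J2 0 y * J2 1 y) :=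
          Finset.sum_le_sum fun y _ => key y
  linarith
end

section
/- Let V be a binary random variable, and let Y_1, Y_2 be random variables on finite alphabets such that P_{Y_2|V} is stochastically degraded with respect to P_{Y_1|V}. Let (V^1, Y_1^1, Y_2^1) and (V^2, Y_1^2, Y_2^2) be two i.i.d. copies, and define U^1 = V^1 \oplus V^2 and U^2 = V^2. Then Z(U^2 | U^1, Y_2^{1:2}) \geq Z(U^2 | U^1, Y_1^{1:2}). -/
open scoped BigOperators

set_option maxHeartbeats 1000000

lemma sum_sqrt_mul_le_sqrt_sum {ι : Type*} [Fintype ι] (f g : ι → ℝ)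
    (hf : ∀ i, 0 ≤ f i) (hg : ∀ i, 0 ≤ g i) :
    ∑ i, Real.sqrt (f i * g i) ≤ Real.sqrt ((∑ i, f i) * ∑ i, g i) := by
  rw [show ∑ i, Real.sqrt (f i * g i)
      = Real.sqrt ((∑ i, Real.sqrt (f i * g i)) ^ 2) from
    (Real.sqrt_sq (Finset.sum_nonneg fun i _ => Real.sqrt_nonneg _)).symm]
  apply Real.sqrt_le_sqrt
  calc (∑ i, Real.sqrt (f i * g i)) ^ 2
      = (∑ i, Real.sqrt (f i) * Real.sqrt (g i)) ^ 2 := by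
        congr 1
        exact Finset.sum_congr rfl fun i _ => Real.sqrt_mul (hf i) _
    _ ≤ (∑ i, Real.sqrt (f i) ^ 2) * ∑ i, Real.sqrt (g i) ^ 2 :=
        Finset.sum_mul_sq_le_sq_mul_sq _ _ _
    _ = (∑ i, f i) * ∑ i, g i := by
        congr 1 <;> exact Finset.sum_congr rfl fun i _ => Real.sq_sqrt (by first | exact hf i | exact hg i)

/-- Two i.i.d. copies `(V¹,Y₁¹,Y₂¹)`, `(V²,Y₁²,Y₂²)` with binary `V` distributed as `pV`
and channels `W1 = P_{Y₁|V}`, `W2 = P_{Y₂|V}` where `W2` is stochastically degraded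
w.r.t. `W1` via `K`.  With `U¹ = V¹ ⊕ V²`, `U² = V²`, the joint distribution of
`(U², (U¹, Yₐ¹, Yₐ²))` is `Ja u2 (u1,y,y') = pV(u1⊕u2) pV(u2) Wa(y|u1⊕u2) Wa(y'|u2)`.
Then the Bhattacharyya parameters satisfy `Z(U²|U¹,Y₂^{1:2}) ≥ Z(U²|U¹,Y₁^{1:2})`. -/
theorem polar_second_bit_bhattacharyya_of_degraded
    {Y1 Y2 : Type*} [Fintype Y1] [Fintype Y2]
    (pV : Fin 2 → ℝ) (hpV : ∀ v, 0 ≤ pV v) (hpVsum : ∑ v, pV v = 1)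
    (W1 : Fin 2 → Y1 → ℝ) (hW1 : ∀ v y, 0 ≤ W1 v y) (hW1sum : ∀ v, ∑ y, W1 v y = 1)
    (W2 : Fin 2 → Y2 → ℝ) (hW2 : ∀ v y, 0 ≤ W2 v y) (hW2sum : ∀ v, ∑ y, W2 v y = 1)
    (K : Y1 → Y2 → ℝ) (hK : ∀ y1 y2, 0 ≤ K y1 y2) (hKsum : ∀ y1, ∑ y2, K y1 y2 = 1)
    (hdeg : ∀ v y2, W2 v y2 = ∑ y1, W1 v y1 * K y1 y2)
    (J1 : Fin 2 → Fin 2 × Y1 × Y1 → ℝ)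
    (hJ1 : ∀ u2 w, J1 u2 w =
      pV (w.1 + u2) * pV u2 * W1 (w.1 + u2) w.2.1 * W1 u2 w.2.2)
    (J2 : Fin 2 → Fin 2 × Y2 × Y2 → ℝ)
    (hJ2 : ∀ u2 w, J2 u2 w =
      pV (w.1 + u2) * pV u2 * W2 (w.1 + u2) w.2.1 * W2 u2 w.2.2) :
    2 * ∑ w : Fin 2 × Y1 × Y1, Real.sqrt (J1 0 w * J1 1 w)
      ≤ 2 * ∑ w : Fin 2 × Y2 × Y2, Real.sqrt (J2 0 w * J2 1 w) := by
  have hJ1nn : ∀ u2 w, 0 ≤ J1 u2 w := fun u2 w => by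
    rw [hJ1]
    exact mul_nonneg (mul_nonneg (mul_nonneg (hpV _) (hpV _)) (hW1 _ _)) (hW1 _ _)
  -- expansion of J2 via the kernel
  have hexp : ∀ u2 (u1 : Fin 2) (y y' : Y2),
      J2 u2 (u1, y, y') = ∑ p : Y1 × Y1, J1 u2 (u1, p.1, p.2) * (K p.1 y * K p.2 y') := by
    intro u2 u1 y y'
    calc J2 u2 (u1, y, y')
        = pV (u1 + u2) * pV u2 *
            ((∑ y1, W1 (u1 + u2) y1 * K y1 y) * (∑ y1', W1 u2 y1' * K y1' y')) := by
          rw [hJ2]; simp only [hdeg]; ring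
      _ = pV (u1 + u2) * pV u2 *
            (∑ p : Y1 × Y1, (W1 (u1 + u2) p.1 * K p.1 y) * (W1 u2 p.2 * K p.2 y')) := by
          rw [Finset.sum_mul_sum, Fintype.sum_prod_type]
      _ = ∑ p : Y1 × Y1, J1 u2 (u1, p.1, p.2) * (K p.1 y * K p.2 y') := by
          rw [Finset.mul_sum]
          exact Finset.sum_congr rfl fun p _ => by rw [hJ1]; ring
  have key : ∀ (u1 : Fin 2) (y y' : Y2),
      ∑ p : Y1 × Y1, Real.sqrt (J1 0 (u1, p.1, p.2) * J1 1 (u1, p.1, p.2)) * (K p.1 y * K p.2 y')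
        ≤ Real.sqrt (J2 0 (u1, y, y') * J2 1 (u1, y, y')) := by
    intro u1 y y'
    set f : Y1 × Y1 → ℝ := fun p => J1 0 (u1, p.1, p.2) * (K p.1 y * K p.2 y') with hfdef
    set g : Y1 × Y1 → ℝ := fun p => J1 1 (u1, p.1, p.2) * (K p.1 y * K p.2 y') with hgdef
    have hf : ∀ p, 0 ≤ f p := fun p => mul_nonneg (hJ1nn _ _) (mul_nonneg (hK _ _) (hK _ _))
    have hg : ∀ p, 0 ≤ g p := fun p => mul_nonneg (hJ1nn _ _) (mul_nonneg (hK _ _) (hK _ _))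
    calc ∑ p : Y1 × Y1,
          Real.sqrt (J1 0 (u1, p.1, p.2) * J1 1 (u1, p.1, p.2)) * (K p.1 y * K p.2 y')
        = ∑ p : Y1 × Y1, Real.sqrt (f p * g p) := by
          refine Finset.sum_congr rfl fun p _ => ?_
          have hKK : (0:ℝ) ≤ K p.1 y * K p.2 y' := mul_nonneg (hK _ _) (hK _ _)
          rw [hfdef, hgdef]
          rw [show (J1 0 (u1, p.1, p.2) * (K p.1 y * K p.2 y')) *
                (J1 1 (u1, p.1, p.2) * (K p.1 y * K p.2 y'))
              = (J1 0 (u1, p.1, p.2) * J1 1 (u1, p.1, p.2)) * (K p.1 y * K p.2 y') ^ 2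
              from by ring,
            Real.sqrt_mul (mul_nonneg (hJ1nn _ _) (hJ1nn _ _)), Real.sqrt_sq hKK]
      _ ≤ Real.sqrt ((∑ p, f p) * ∑ p, g p) := sum_sqrt_mul_le_sqrt_sum f g hf hg
      _ = Real.sqrt (J2 0 (u1, y, y') * J2 1 (u1, y, y')) := by
          rw [hexp 0, hexp 1]
  have hmain : ∑ w : Fin 2 × Y1 × Y1, Real.sqrt (J1 0 w * J1 1 w)
      ≤ ∑ w : Fin 2 × Y2 × Y2, Real.sqrt (J2 0 w * J2 1 w) := by
    rw [Fintype.sum_prod_type, Fintype.sum_prod_type]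
    refine Finset.sum_le_sum fun u1 _ => ?_
    calc ∑ p : Y1 × Y1, Real.sqrt (J1 0 (u1, p) * J1 1 (u1, p))
        = ∑ p : Y1 × Y1, ∑ y : Y2, ∑ y' : Y2,
            Real.sqrt (J1 0 (u1, p.1, p.2) * J1 1 (u1, p.1, p.2)) * (K p.1 y * K p.2 y') := by
          refine Finset.sum_congr rfl fun p _ => ?_
          simp only [← Finset.mul_sum, hKsum, mul_one]
      _ = ∑ y : Y2, ∑ y' : Y2, ∑ p : Y1 × Y1,
            Real.sqrt (J1 0 (u1, p.1, p.2) * J1 1 (u1, p.1, p.2)) * (K p.1 y * K p.2 y') := by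
          rw [Finset.sum_comm]
          exact Finset.sum_congr rfl fun y _ => Finset.sum_comm
      _ ≤ ∑ y : Y2, ∑ y' : Y2, Real.sqrt (J2 0 (u1, y, y') * J2 1 (u1, y, y')) :=
          Finset.sum_le_sum fun y _ => Finset.sum_le_sum fun y' _ => key u1 y y'
      _ = ∑ w : Y2 × Y2, Real.sqrt (J2 0 (u1, w) * J2 1 (u1, w)) := by
          rw [Fintype.sum_prod_type]
  linarith
end

section
/- Let (U_1,...,U_n) be binary random variables with joint distribution P, let M \subseteq {1,...,n}, and let Q be the perturbed measure replacing conditionals at indices in M by the uniform distribution 1/2. If for every j \in M the conditional entropy satisfies H(U_j | U_1^{j-1}) \geq 1 - 2\delta, then the total variation distance satisfies \sum_{u^n} |P(u^n) - Q(u^n)| \leq \sqrt{(2 \ln 2) \cdot 2\delta |M|}. -/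
/-!
By the chain rule the conditionals `condProb p j u` multiply to `p u`, so on the support of `p`
we have `p u / Q u = ∏_{j ∈ M} 2 · condProb p j u`, and the relative entropy of `p` to `Q` in bits
is `∑_{j ∈ M} (1 - H(U_j | U^{j-1})) ≤ 2δ|M|`. Pinsker's inequality turns this into the bound on
`∑ |p - Q|`. Since a prefix of probability zero has all its conditionals equal to `0 / 0 = 0`, `Q`
is in general only a sub-probability; Pinsker's inequality still holds for it, by Cauchy–Schwarz
from the pointwise bound `3 (a - b)² ≤ (2a + 4b) (a log (a / b) - a + b)`.
-/

open Real InformationTheory Finset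

lemma monotoneOn_add_one_mul_log_sub :
    MonotoneOn (fun x => (x + 1) * log x - 2 * (x - 1)) (Set.Ioi 0) := by
  refine monotoneOn_of_hasDerivWithinAt_nonneg (f' := fun x => log x - (1 - x⁻¹)) (convex_Ioi 0)
    (fun x hx => ?_) (fun x hx => ?_) (fun x hx => ?_)
  · have : x ≠ 0 := ne_of_gt hx
    fun_prop (disch := assumption)
  · rw [interior_Ioi, Set.mem_Ioi] at hx
    have h := ((hasDerivAt_id' x).add_const 1).fun_mul (hasDerivAt_log hx.ne')
      |>.fun_sub (((hasDerivAt_id' x).sub_const 1).const_mul 2)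
    refine (h.congr_deriv ?_).hasDerivWithinAt
    field_simp
    ring
  · rw [interior_Ioi] at hx
    exact sub_nonneg.2 (one_sub_inv_le_log_of_pos hx)

lemma three_mul_sq_sub_one_le_mul_klFun {x : ℝ} (hx : 0 ≤ x) :
    3 * (x - 1) ^ 2 ≤ (2 * x + 4) * klFun x := by
  set φ := fun y : ℝ => (y + 1) * log y - 2 * (y - 1)
  set g := fun y : ℝ => (2 * y + 4) * klFun y - 3 * (y - 1) ^ 2
  have hφ : MonotoneOn φ (Set.Ioi 0) := monotoneOn_add_one_mul_log_sub
  have hφ_one : φ 1 = 0 := by simp [φ]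
  have hg_deriv : ∀ y, 0 < y → HasDerivAt g (4 * φ y) y := by
    intro y hy
    have h := (((hasDerivAt_id' y).const_mul 2).add_const 4).fun_mul (hasDerivAt_klFun hy.ne')
      |>.fun_sub ((((hasDerivAt_id' y).sub_const 1).fun_pow 2).const_mul 3)
    refine h.congr_deriv ?_
    simp only [φ, klFun]
    ring
  have hg_cont : ContinuousOn g (Set.Ici 0) := by fun_prop
  suffices g 1 ≤ g x by simpa [g, klFun_one] using this
  rcases le_total 1 x with h1 | h1
  · refine monotoneOn_of_hasDerivWithinAt_nonneg (convex_Ici 1) (f' := fun y => 4 * φ y)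
      (hg_cont.mono (Set.Ici_subset_Ici.2 zero_le_one)) (fun y hy => ?_) (fun y hy => ?_)
      Set.self_mem_Ici h1 h1 <;> rw [interior_Ici] at hy
    · exact (hg_deriv y (one_pos.trans hy)).hasDerivWithinAt
    · linarith [hφ (Set.mem_Ioi.2 one_pos) (Set.mem_Ioi.2 (one_pos.trans hy)) hy.le]
  · refine antitoneOn_of_hasDerivWithinAt_nonpos (convex_Icc 0 1) (f' := fun y => 4 * φ y)
      (hg_cont.mono Set.Icc_subset_Ici_self) (fun y hy => ?_) (fun y hy => ?_)
      ⟨hx, h1⟩ (Set.right_mem_Icc.2 zero_le_one) h1 <;> rw [interior_Icc] at hy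
    · exact (hg_deriv y hy.1).hasDerivWithinAt
    · linarith [hφ (Set.mem_Ioi.2 hy.1) (Set.mem_Ioi.2 one_pos) hy.2.le]

lemma mul_log_div_sub_add_eq_mul_klFun (a : ℝ) {b : ℝ} (hb : b ≠ 0) :
    a * log (a / b) - a + b = b * klFun (a / b) := by
  simp only [klFun]
  field_simp
  ring

lemma mul_log_div_sub_add_nonneg {a b : ℝ} (ha : 0 ≤ a) (hb : 0 ≤ b) (hab : b = 0 → a = 0) :
    0 ≤ a * log (a / b) - a + b := by
  rcases hb.eq_or_lt with rfl | hb
  · simp [hab rfl]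
  · rw [mul_log_div_sub_add_eq_mul_klFun a hb.ne']
    exact mul_nonneg hb.le (klFun_nonneg (div_nonneg ha hb.le))

lemma three_mul_sq_sub_le_mul_log_div {a b : ℝ} (ha : 0 ≤ a) (hb : 0 ≤ b) (hab : b = 0 → a = 0) :
    3 * (a - b) ^ 2 ≤ (2 * a + 4 * b) * (a * log (a / b) - a + b) := by
  rcases hb.eq_or_lt with rfl | hb
  · simp [hab rfl]
  · have h := mul_le_mul_of_nonneg_left (three_mul_sq_sub_one_le_mul_klFun (div_nonneg ha hb.le))
      (sq_nonneg b)
    rw [mul_log_div_sub_add_eq_mul_klFun a hb.ne']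
    have e1 : b ^ 2 * (3 * (a / b - 1) ^ 2) = 3 * (a - b) ^ 2 := by field_simp
    have e2 : b ^ 2 * ((2 * (a / b) + 4) * klFun (a / b)) =
        (2 * a + 4 * b) * (b * klFun (a / b)) := by
      field_simp
    linarith

theorem sum_abs_sub_le_sqrt_two_mul_sum_mul_log_div {ι : Type*} [Fintype ι] {p q : ι → ℝ}
    (hp : ∀ i, 0 ≤ p i) (hq : ∀ i, 0 ≤ q i) (hpq : ∀ i, q i = 0 → p i = 0)
    (hp1 : ∑ i, p i = 1) (hq1 : ∑ i, q i ≤ 1) :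
    ∑ i, |p i - q i| ≤ √(2 * ∑ i, p i * log (p i / q i)) := by
  have hCS : (∑ i, |p i - q i|) ^ 2 ≤
      (∑ i, (p i * log (p i / q i) - p i + q i)) * ∑ i, (2 * p i + 4 * q i) / 3 :=
    sum_sq_le_sum_mul_sum_of_sq_le_mul _
      (fun i _ => mul_log_div_sub_add_nonneg (hp i) (hq i) (hpq i))
      (fun i _ => by linarith [hp i, hq i])
      (fun i _ => by
        rw [sq_abs]
        linarith [three_mul_sq_sub_le_mul_log_div (hp i) (hq i) (hpq i)])
  rw [sum_add_distrib, sum_sub_distrib, ← sum_div, sum_add_distrib, ← mul_sum, ← mul_sum,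
    hp1] at hCS
  refine (le_abs_self _).trans (abs_le_sqrt ?_)
  have hK : 0 ≤ ∑ i, p i * log (p i / q i) - 1 + ∑ i, q i :=
    sum_nonneg (fun i _ => mul_log_div_sub_add_nonneg (hp i) (hq i) (hpq i)) |>.trans_eq
      (by rw [sum_add_distrib, sum_sub_distrib, hp1])
  nlinarith [sum_nonneg fun i (_ : i ∈ univ) => hq i]

theorem sum_prod_le_one_of_sum_update_le_one {α : Type*} [Fintype α] [DecidableEq α] {n : ℕ}
    (f : Fin n → (Fin n → α) → ℝ) (hf : ∀ j u, 0 ≤ f j u)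
    (hdep : ∀ j u v, (∀ i ≤ j, u i = v i) → f j u = f j v)
    (hsum : ∀ j u, ∑ a, f j (Function.update u j a) ≤ 1) :
    ∑ u, ∏ j, f j u ≤ 1 := by
  induction n with
  | zero => simp
  | succ n ih =>
    cases isEmpty_or_nonempty α with
    | inl _ => simp
    | inr hα =>
    obtain ⟨a₀⟩ := hα
    set v₀ : Fin n → α := fun _ => a₀
    have hhead : ∀ a v, f 0 (Fin.cons a v) = f 0 (Fin.cons a v₀) := fun a v =>
      hdep 0 _ _ fun i hi => by rw [Fin.le_zero_iff.1 hi]; rfl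
    have htail : ∀ a, ∑ v, ∏ j : Fin n, f j.succ (Fin.cons a v) ≤ 1 := fun a =>
      ih (fun j v => f j.succ (Fin.cons a v)) (fun _ _ => hf _ _)
        (fun j u v huv => hdep _ _ _ fun i hi => by
          cases i using Fin.cases with
          | zero => rfl
          | succ i => exact huv i (Fin.succ_le_succ_iff.1 hi))
        (fun j v => by simpa only [Fin.cons_update] using hsum j.succ (Fin.cons a v))
    calc ∑ u, ∏ j, f j u
        = ∑ a, f 0 (Fin.cons a v₀) * ∑ v, ∏ j : Fin n, f j.succ (Fin.cons a v) := by
          rw [← (Fin.consEquiv fun _ => α).sum_comp, Fintype.sum_prod_type]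
          refine sum_congr rfl fun a _ => ?_
          rw [mul_sum]
          refine sum_congr rfl fun v _ => ?_
          rw [Fin.prod_univ_succ]
          exact congrArg (· * _) (hhead a v)
      _ ≤ ∑ a, f 0 (Fin.cons a v₀) := sum_le_sum fun a _ =>
          mul_le_of_le_one_right (hf _ _) (htail a)
      _ ≤ 1 := by simpa only [Fin.update_cons_zero] using hsum 0 (Fin.cons a₀ v₀)

section Prefix

variable {α : Type*} [Fintype α] [DecidableEq α] {n : ℕ} (p : (Fin n → α) → ℝ)

noncomputable def prefixProb (j : ℕ) (u : Fin n → α) : ℝ :=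
  ∑ w, if (∀ i : Fin n, (i : ℕ) < j → w i = u i) then p w else 0

noncomputable def condProb (j : Fin n) (u : Fin n → α) : ℝ :=
  prefixProb p ((j : ℕ) + 1) u / prefixProb p j u

variable {p}

lemma prefixProb_zero (u : Fin n → α) : prefixProb p 0 u = ∑ w, p w := by
  simp [prefixProb]

lemma prefixProb_of_le {j : ℕ} (hj : n ≤ j) (u : Fin n → α) : prefixProb p j u = p u := by
  have hiff : ∀ w : Fin n → α, (∀ i : Fin n, (i : ℕ) < j → w i = u i) ↔ w = u := fun w =>
    ⟨fun h => funext fun i => h i (i.isLt.trans_le hj), fun h _ _ => h ▸ rfl⟩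
  simp only [prefixProb, hiff, sum_ite_eq']
  simp

lemma prefixProb_nonneg (hp : ∀ u, 0 ≤ p u) (j : ℕ) (u : Fin n → α) : 0 ≤ prefixProb p j u :=
  sum_nonneg fun w _ => by split_ifs <;> simp [hp w]

lemma le_prefixProb (hp : ∀ u, 0 ≤ p u) (j : ℕ) (u : Fin n → α) : p u ≤ prefixProb p j u := by
  refine le_of_eq_of_le (by simp) (single_le_sum (fun w _ => ?_) (mem_univ u))
  split_ifs <;> simp [hp w]

lemma prefixProb_congr {j : ℕ} {u v : Fin n → α} (h : ∀ i : Fin n, (i : ℕ) < j → u i = v i) :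
    prefixProb p j u = prefixProb p j v := by
  refine sum_congr rfl fun w _ => if_congr ?_ rfl rfl
  exact forall₂_congr fun i hi => by rw [h i hi]

lemma sum_prefixProb_succ_update (j : Fin n) (u : Fin n → α) :
    ∑ a, prefixProb p ((j : ℕ) + 1) (Function.update u j a) = prefixProb p j u := by
  have hiff : ∀ (w : Fin n → α) (a : α),
      (∀ i : Fin n, (i : ℕ) < j + 1 → w i = Function.update u j a i) ↔
        (∀ i : Fin n, (i : ℕ) < j → w i = u i) ∧ w j = a := by
    intro w a
    constructor
    · intro h
      refine ⟨fun i hi => ?_, by simpa using h j (by omega)⟩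
      rw [h i (by omega), Function.update_of_ne (ne_of_apply_ne Fin.val (by omega))]
    · rintro ⟨h, rfl⟩ i hi
      rcases eq_or_ne i j with rfl | hij
      · simp
      · rw [Function.update_of_ne hij, h i (by have := Fin.val_ne_of_ne hij; omega)]
  simp only [prefixProb, hiff, ite_and]
  rw [sum_comm]
  simp

lemma condProb_nonneg (hp : ∀ u, 0 ≤ p u) (j : Fin n) (u : Fin n → α) : 0 ≤ condProb p j u :=
  div_nonneg (prefixProb_nonneg hp _ u) (prefixProb_nonneg hp _ u)

lemma condProb_pos (hp : ∀ u, 0 ≤ p u) {u : Fin n → α} (hu : 0 < p u) (j : Fin n) :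
    0 < condProb p j u :=
  div_pos (hu.trans_le (le_prefixProb hp _ u)) (hu.trans_le (le_prefixProb hp _ u))

lemma condProb_congr {j : Fin n} {u v : Fin n → α} (h : ∀ i ≤ j, u i = v i) :
    condProb p j u = condProb p j v := by
  rw [condProb, condProb, prefixProb_congr fun i hi => h i (by omega),
    prefixProb_congr fun i hi => h i (by omega)]

lemma sum_condProb_update_le_one (j : Fin n) (u : Fin n → α) :
    ∑ a, condProb p j (Function.update u j a) ≤ 1 := by
  have hprev : ∀ a, prefixProb p j (Function.update u j a) = prefixProb p j u := fun a =>
    prefixProb_congr fun i hi => Function.update_of_ne (ne_of_apply_ne Fin.val hi.ne) _ _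
  simp only [condProb, hprev, ← sum_div, sum_prefixProb_succ_update]
  exact div_self_le_one _

theorem prod_condProb (hp : ∀ u, 0 ≤ p u) {u : Fin n → α} (hu : 0 < p u) :
    ∏ j, condProb p j u = p u / ∑ w, p w := by
  unfold condProb
  have hpos : ∀ k, prefixProb p k u ≠ 0 := fun k => (hu.trans_le (le_prefixProb hp k u)).ne'
  refine (Fin.prod_univ_eq_prod_range
    (fun k => prefixProb p (k + 1) u / prefixProb p k u) n).trans ?_
  rw [← prefixProb_of_le (p := p) le_rfl u, ← prefixProb_zero (p := p) u]
  refine prod_range_induction _ (fun k => prefixProb p k u / prefixProb p 0 u) (div_self (hpos 0))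
    n fun k _ => ?_
  field_simp [hpos k, hpos 0]

end Prefix

section Perturbed

variable {n : ℕ} {p : (Fin n → Fin 2) → ℝ}

noncomputable def perturbedProb (M : Finset (Fin n)) (p : (Fin n → Fin 2) → ℝ)
    (u : Fin n → Fin 2) : ℝ :=
  ∏ j, if j ∈ M then (1 / 2 : ℝ) else condProb p j u

lemma perturbedProb_nonneg (hp : ∀ u, 0 ≤ p u) (M : Finset (Fin n)) (u : Fin n → Fin 2) :
    0 ≤ perturbedProb M p u :=
  prod_nonneg fun j _ => by split_ifs <;> simp [condProb_nonneg hp]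

lemma perturbedProb_pos (hp : ∀ u, 0 ≤ p u) (M : Finset (Fin n)) {u : Fin n → Fin 2}
    (hu : 0 < p u) : 0 < perturbedProb M p u :=
  prod_pos fun j _ => by split_ifs <;> simp [condProb_pos hp hu]

lemma sum_perturbedProb_le_one (hp : ∀ u, 0 ≤ p u) (M : Finset (Fin n)) :
    ∑ u, perturbedProb M p u ≤ 1 := by
  refine sum_prod_le_one_of_sum_update_le_one _
    (fun j u => by split_ifs <;> simp [condProb_nonneg hp])
    (fun j u v h => by rw [condProb_congr h]) (fun j u => ?_)
  by_cases hj : j ∈ M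
  · simp [hj]
  · simpa [hj] using sum_condProb_update_le_one j u

lemma div_perturbedProb (hp : ∀ u, 0 ≤ p u) (hsum : ∑ u, p u = 1) (M : Finset (Fin n))
    {u : Fin n → Fin 2} (hu : 0 < p u) :
    p u / perturbedProb M p u = ∏ j ∈ M, 2 * condProb p j u := by
  conv_lhs =>
    rw [← div_one (p u), ← hsum, ← prod_condProb hp hu, perturbedProb, ← prod_div_distrib]
  rw [← Fintype.prod_ite_mem M (fun j => 2 * condProb p j u)]
  refine prod_congr rfl fun j _ => ?_
  split_ifs
  · ring
  · exact div_self (condProb_pos hp hu j).ne'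

theorem sum_mul_logb_div_perturbedProb (hp : ∀ u, 0 ≤ p u) (hsum : ∑ u, p u = 1)
    (M : Finset (Fin n)) :
    ∑ u, p u * logb 2 (p u / perturbedProb M p u) =
      ∑ j ∈ M, (1 + ∑ u, p u * logb 2 (condProb p j u)) := by
  have hterm : ∀ u, p u * logb 2 (p u / perturbedProb M p u) =
      ∑ j ∈ M, (p u + p u * logb 2 (condProb p j u)) := fun u => by
    rcases (hp u).eq_or_lt with hu | hu
    · simp [← hu]
    · have hc := fun j => (condProb_pos hp hu j).ne'
      rw [div_perturbedProb hp hsum M hu, logb_prod M _ fun j _ => mul_ne_zero two_ne_zero (hc j),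
        mul_sum]
      refine sum_congr rfl fun j _ => ?_
      rw [logb_mul two_ne_zero (hc j), logb_self_eq_one one_lt_two, mul_add, mul_one]
  rw [sum_congr rfl fun u _ => hterm u, sum_comm]
  simp only [sum_add_distrib, hsum]

end Perturbed

theorem tv_le_of_condEntropy_ge_general (n : ℕ)
    (p : (Fin n → Fin 2) → ℝ) (hp : ∀ u, 0 ≤ p u) (hsum : ∑ u, p u = 1)
    (M : Finset (Fin n)) (δ : ℝ)
    (Pre : ℕ → (Fin n → Fin 2) → ℝ)
    (hPre : ∀ j u, Pre j u =
      ∑ w, if (∀ i : Fin n, (i : ℕ) < j → w i = u i) then p w else 0)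
    (Cond : Fin n → (Fin n → Fin 2) → ℝ)
    (hCond : ∀ j u, Cond j u = Pre ((j : ℕ) + 1) u / Pre (j : ℕ) u)
    (Q : (Fin n → Fin 2) → ℝ)
    (hQ : ∀ u, Q u = ∏ j, if j ∈ M then (1/2 : ℝ) else Cond j u)
    (hH : ∀ j ∈ M, 1 - 2 * δ ≤ -∑ u, p u * Real.logb 2 (Cond j u)) :
    ∑ u, |p u - Q u| ≤ Real.sqrt ((2 * Real.log 2) * (2 * δ * M.card)) := by
  obtain rfl : Pre = prefixProb p := funext₂ hPre
  obtain rfl : Cond = condProb p := funext₂ hCond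
  obtain rfl : Q = perturbedProb M p := funext hQ
  have hKL : ∑ u, p u * log (p u / perturbedProb M p u) ≤ log 2 * (2 * δ * M.card) :=
    calc ∑ u, p u * log (p u / perturbedProb M p u)
        = log 2 * ∑ u, p u * logb 2 (p u / perturbedProb M p u) := by
          rw [mul_sum]
          refine sum_congr rfl fun u _ => ?_
          rw [logb]
          field_simp
      _ = log 2 * ∑ j ∈ M, (1 + ∑ u, p u * logb 2 (condProb p j u)) := by
          rw [sum_mul_logb_div_perturbedProb hp hsum]
      _ ≤ log 2 * ∑ _j ∈ M, 2 * δ := by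
          gcongr with j hj
          linarith [hH j hj]
      _ = log 2 * (2 * δ * M.card) := by rw [sum_const, nsmul_eq_mul, mul_comm (M.card : ℝ)]
  calc ∑ u, |p u - perturbedProb M p u|
      ≤ √(2 * ∑ u, p u * log (p u / perturbedProb M p u)) :=
        sum_abs_sub_le_sqrt_two_mul_sum_mul_log_div hp (perturbedProb_nonneg hp M)
          (fun u hu => by_contra fun hpu => (perturbedProb_pos hp M
            ((hp u).lt_of_ne' hpu)).ne' hu) hsum (sum_perturbedProb_le_one hp M)
    _ ≤ √((2 * log 2) * (2 * δ * M.card)) := sqrt_le_sqrt (by linarith)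

/-- Total variation bound: for binary `(U₁,…,Uₙ)` with joint distribution `p` and `Q`
the perturbed measure replacing the conditionals at indices `j ∈ M` by uniform `1/2`,
if `H(U_j | U₁^{j-1}) ≥ 1 - 2δ` for every `j ∈ M`, then
`∑_{uⁿ} |P(uⁿ) - Q(uⁿ)| ≤ √((2 ln 2) · 2δ|M|)`. -/
theorem tv_le_of_condEntropy_ge (n : ℕ)
    (p : (Fin n → Fin 2) → ℝ) (hp : ∀ u, 0 ≤ p u) (hsum : ∑ u, p u = 1)
    (M : Finset (Fin n)) (δ : ℝ) (hδ : 0 ≤ δ)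
    (Pre : ℕ → (Fin n → Fin 2) → ℝ)
    (hPre : ∀ j u, Pre j u =
      ∑ w, if (∀ i : Fin n, (i : ℕ) < j → w i = u i) then p w else 0)
    (Cond : Fin n → (Fin n → Fin 2) → ℝ)
    (hCond : ∀ j u, Cond j u = Pre ((j : ℕ) + 1) u / Pre (j : ℕ) u)
    (Q : (Fin n → Fin 2) → ℝ)
    (hQ : ∀ u, Q u = ∏ j, if j ∈ M then (1/2 : ℝ) else Cond j u)
    (hH : ∀ j ∈ M, 1 - 2 * δ ≤ -∑ u, p u * Real.logb 2 (Cond j u)) :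
    ∑ u, |p u - Q u| ≤ Real.sqrt ((2 * Real.log 2) * (2 * δ * M.card)) :=
  tv_le_of_condEntropy_ge_general n p hp hsum M δ Pre hPre Cond hCond Q hQ hH
end
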